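/- arXiv:2203.10632 — 6 statements merged into one kernel-verified Lean document; each statement's English description precedes it below -/
import Mathlib

section
/- For positive real numbers a_1, …, a_L with 0 ≤ a_l ≤ 1 for all l, we have (4/π²) · ∏_{l=1}^{L} (1 + a_l)/2 ≤ ∏_{l=1}^{L} (1 + a_l · cos(π/2^l))/2 ≤ ∏_{l=1}^{L} (1 + a_l)/2. -/
/-!
Since `(1 + cos 2y)/2 = cos² y`, the product `∏ (1 + cos(π/2^l))/2` is the square of the
Viète product `∏ cos((π/2)/2^l)`, which telescopes by the double-angle formula into
`sin(π/2) / (2^L sin((π/2)/2^L)) ≥ 2/π`. Each factor `(1 + a c)/2` with `a, c ∈ [-1, 1]`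
dominates `((1 + c)/2)((1 + a)/2)` because their difference is `(1 - a)(1 - c)/4`.
-/

open Real Finset

theorem sin_eq_two_pow_mul_sin_mul_prod_cos (x : ℝ) (n : ℕ) :
    sin x = 2 ^ n * sin (x / 2 ^ n) * ∏ k ∈ Icc 1 n, cos (x / 2 ^ k) := by
  induction n with
  | zero => simp
  | succ n ih =>
    have hsin : sin (x / 2 ^ n) = 2 * sin (x / 2 ^ (n + 1)) * cos (x / 2 ^ (n + 1)) := by
      rw [← sin_two_mul, pow_succ, ← div_div, mul_div_cancel₀ _ two_ne_zero]
    rw [prod_Icc_succ_top (by omega), ih, hsin, pow_succ]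
    ring

theorem sin_le_mul_prod_cos_div_two_pow {x : ℝ} (hx₀ : 0 ≤ x) (hxπ : x ≤ π) (n : ℕ) :
    sin x ≤ x * ∏ k ∈ Icc 1 n, cos (x / 2 ^ k) := by
  have hcos : 0 ≤ ∏ k ∈ Icc 1 n, cos (x / 2 ^ k) := by
    refine prod_nonneg fun k hk => cos_nonneg_of_mem_Icc ⟨by linarith [pi_pos,
      (by positivity : 0 ≤ x / 2 ^ k)], ?_⟩
    calc x / 2 ^ k ≤ x / 2 ^ 1 :=
          div_le_div_of_nonneg_left hx₀ (by norm_num)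
            (pow_le_pow_right₀ one_le_two (mem_Icc.1 hk).1)
      _ ≤ π / 2 := by linarith
  have hsin : 2 ^ n * sin (x / 2 ^ n) ≤ x := by
    calc 2 ^ n * sin (x / 2 ^ n) ≤ 2 ^ n * (x / 2 ^ n) := by
          gcongr; exact sin_le (by positivity)
      _ = x := mul_div_cancel₀ _ (by positivity)
  rw [sin_eq_two_pow_mul_sin_mul_prod_cos x n]
  exact mul_le_mul_of_nonneg_right hsin hcos

theorem four_div_pi_sq_le_prod_one_add_cos_div_two (n : ℕ) :
    4 / π ^ 2 ≤ ∏ l ∈ Icc 1 n, (1 + cos (π / 2 ^ l)) / 2 := by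
  have hhalf : ∀ l ∈ Icc 1 n, (1 + cos (π / 2 ^ l)) / 2 = cos (π / 2 / 2 ^ l) ^ 2 := by
    intro l _
    rw [cos_sq, show 2 * (π / 2 / 2 ^ l) = π / 2 ^ l by ring]
    ring
  have hviete : 2 / π ≤ ∏ l ∈ Icc 1 n, cos (π / 2 / 2 ^ l) := by
    have h := sin_le_mul_prod_cos_div_two_pow (x := π / 2) (by positivity)
      (by linarith [pi_pos]) n
    rw [sin_pi_div_two] at h
    rw [div_le_iff₀' pi_pos]
    linarith
  rw [prod_congr rfl hhalf, prod_pow, show (4 : ℝ) / π ^ 2 = (2 / π) ^ 2 by ring]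
  exact pow_le_pow_left₀ (by positivity) hviete 2

section HalfOneAdd

variable {ι : Type*} {s : Finset ι} {a c : ι → ℝ}

theorem prod_one_add_div_two_mul_prod_le (ha : ∀ i ∈ s, |a i| ≤ 1) (hc : ∀ i ∈ s, |c i| ≤ 1) :
    (∏ i ∈ s, (1 + c i) / 2) * ∏ i ∈ s, (1 + a i) / 2 ≤ ∏ i ∈ s, (1 + a i * c i) / 2 := by
  rw [← prod_mul_distrib]
  refine prod_le_prod (fun i hi => ?_) fun i hi => ?_
  · obtain ⟨ha₀, -⟩ := abs_le.1 (ha i hi)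
    obtain ⟨hc₀, -⟩ := abs_le.1 (hc i hi)
    exact mul_nonneg (by linarith) (by linarith)
  · obtain ⟨-, ha₁⟩ := abs_le.1 (ha i hi)
    obtain ⟨-, hc₁⟩ := abs_le.1 (hc i hi)
    nlinarith [mul_nonneg (sub_nonneg.2 ha₁) (sub_nonneg.2 hc₁)]

theorem prod_one_add_mul_div_two_le (ha : ∀ i ∈ s, a i ∈ Set.Icc (0 : ℝ) 1)
    (hc : ∀ i ∈ s, |c i| ≤ 1) :
    ∏ i ∈ s, (1 + a i * c i) / 2 ≤ ∏ i ∈ s, (1 + a i) / 2 := by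
  refine prod_le_prod (fun i hi => ?_) fun i hi => ?_
  · obtain ⟨ha₀, ha₁⟩ := ha i hi
    have := abs_le.1 (hc i hi)
    nlinarith
  · obtain ⟨ha₀, -⟩ := ha i hi
    nlinarith [mul_le_mul_of_nonneg_left (abs_le.1 (hc i hi)).2 ha₀]

end HalfOneAdd

theorem prod_cos_bounds_general (L : ℕ) (a : ℕ → ℝ)
    (ha : ∀ l ∈ Finset.Icc 1 L, 0 ≤ a l ∧ a l ≤ 1) :
    (4 / Real.pi ^ 2) * ∏ l ∈ Finset.Icc 1 L, (1 + a l) / 2 ≤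
      (∏ l ∈ Finset.Icc 1 L, (1 + a l * Real.cos (Real.pi / 2 ^ l)) / 2) ∧
    (∏ l ∈ Finset.Icc 1 L, (1 + a l * Real.cos (Real.pi / 2 ^ l)) / 2) ≤
      ∏ l ∈ Finset.Icc 1 L, (1 + a l) / 2 := by
  have hcos : ∀ l ∈ Icc 1 L, |cos (π / 2 ^ l)| ≤ 1 := fun l _ => abs_cos_le_one _
  have ha_abs : ∀ l ∈ Icc 1 L, |a l| ≤ 1 := fun l hl =>
    abs_le.2 ⟨by linarith [(ha l hl).1], (ha l hl).2⟩
  refine ⟨?_, prod_one_add_mul_div_two_le ha hcos⟩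
  calc 4 / π ^ 2 * ∏ l ∈ Icc 1 L, (1 + a l) / 2
      ≤ (∏ l ∈ Icc 1 L, (1 + cos (π / 2 ^ l)) / 2) * ∏ l ∈ Icc 1 L, (1 + a l) / 2 :=
        mul_le_mul_of_nonneg_right (four_div_pi_sq_le_prod_one_add_cos_div_two L)
          (prod_nonneg fun l hl => by linarith [(ha l hl).1])
    _ ≤ _ := prod_one_add_div_two_mul_prod_le ha_abs hcos

/-- For `a_l ∈ [0,1]`, the product `∏ (1 + a_l cos(π/2^l))/2` is sandwiched between
`(4/π²) ∏ (1 + a_l)/2` and `∏ (1 + a_l)/2`. -/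
theorem prod_cos_bounds (L : ℕ) (hL : 0 < L) (a : ℕ → ℝ)
    (ha : ∀ l ∈ Finset.Icc 1 L, 0 ≤ a l ∧ a l ≤ 1) :
    (4 / Real.pi ^ 2) * ∏ l ∈ Finset.Icc 1 L, (1 + a l) / 2 ≤
      (∏ l ∈ Finset.Icc 1 L, (1 + a l * Real.cos (Real.pi / 2 ^ l)) / 2) ∧
    (∏ l ∈ Finset.Icc 1 L, (1 + a l * Real.cos (Real.pi / 2 ^ l)) / 2) ≤
      ∏ l ∈ Finset.Icc 1 L, (1 + a l) / 2 :=
  prod_cos_bounds_general L a ha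
end

section
/- Let x be a positive real number and p/q a positive rational number (p, q positive integers) with |x − p/q| < 1/(2q²). Then p/q is a convergent of the continued fraction expansion of x. -/
/-!
Legendre's theorem (`Real.exists_convs_eq_rat`) gives the claim when `q` is the reduced
denominator of `p/q`; in general the reduced denominator is a divisor of `q`, so the error
bound only becomes weaker after reducing the fraction.
-/

theorem Rat.den_intCast_div_natCast_le (a : ℤ) {n : ℕ} (hn : 0 < n) :
    ((a : ℚ) / n).den ≤ n := by
  have hdvd : (((a : ℚ) / n).den : ℤ) ∣ n := by
    simpa only [Rat.divInt_eq_div, Int.cast_natCast] using Rat.den_dvd a n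
  exact Nat.le_of_dvd hn (Int.natCast_dvd_natCast.mp hdvd)

theorem Real.exists_convs_eq_div_of_abs_sub_lt {ξ : ℝ} (p : ℤ) {q : ℕ} (hq : 0 < q)
    (h : |ξ - p / q| < 1 / (2 * (q : ℝ) ^ 2)) :
    ∃ n, (GenContFract.of ξ).convs n = p / q := by
  set r : ℚ := (p : ℚ) / q
  have hr : (r : ℝ) = p / q := by push_cast [r]; rfl
  have hden : (r.den : ℝ) ≤ q := Nat.cast_le.mpr (Rat.den_intCast_div_natCast_le p hq)
  have hbound : 1 / (2 * (q : ℝ) ^ 2) ≤ 1 / (2 * (r.den : ℝ) ^ 2) := by gcongr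
  rw [← hr] at h ⊢
  exact Real.exists_convs_eq_rat (h.trans_le hbound)

theorem convergent_of_close_approx_general (x : ℝ) (p q : ℕ)
    (hq : 0 < q)
    (h : |x - (p : ℝ) / q| < 1 / (2 * (q : ℝ) ^ 2)) :
    ∃ n : ℕ, (GenContFract.of x).convs n = (p : ℝ) / q := by
  simpa only [Int.cast_natCast] using
    Real.exists_convs_eq_div_of_abs_sub_lt (ξ := x) p hq (by simpa only [Int.cast_natCast] using h)

/-- If a positive rational `p/q` approximates a positive real `x` with
`|x - p/q| < 1/(2q²)`, then `p/q` is a convergent of the continued fraction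
expansion of `x`. -/
theorem convergent_of_close_approx (x : ℝ) (hx : 0 < x) (p q : ℕ)
    (hp : 0 < p) (hq : 0 < q)
    (h : |x - (p : ℝ) / q| < 1 / (2 * (q : ℝ) ^ 2)) :
    ∃ n : ℕ, (GenContFract.of x).convs n = (p : ℝ) / q :=
  convergent_of_close_approx_general x p q hq h
end

section
/- Let r ≥ 1 and x coprime to N with multiplicative order r modulo N. For j = 0, …, r−1, define |ψ_j⟩ = (1/√r) Σ_{l=0}^{r−1} e^{−2πi l j/r} |x^l mod N⟩ in ℂ^N. Then U_B|ψ_j⟩ = e^{2πi j/r}|ψ_j⟩, where U_B|n⟩ = |x·n mod N⟩, and the states |ψ_j⟩, j = 0,…,r−1, are orthonormal. -/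
/-!
Left multiplication by `x` sends `|x^l⟩` to `|x^(l+1)⟩`. Both `x^l` and the phase
`e^{-2πilj/r}` are `r`-periodic in `l`, so the shifted sum is `ψ_j` again, up to the
factor `e^{2πij/r}`. Since `l ↦ x^l` is injective on `l < r`, the inner product
`⟨ψ_j|ψ_j'⟩` collapses to the geometric sum `r⁻¹ ∑_{l<r} e^{2πil(j-j')/r}`, which is
`1` if `j = j'` and `0` otherwise.
-/
open Matrix Finset Complex

open ComplexConjugate

section OrbitState

variable {M : Type*} [Monoid M] [DecidableEq M]

/-- `∑_{l < r} a ^ l |g ^ l⟩`; the paper's `|ψ_j⟩` is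
`r^{-1/2} • orbitState x r (e^{-2πij/r})`. -/
noncomputable def orbitState (g : M) (r : ℕ) (a : ℂ) : M → ℂ :=
  ∑ l ∈ range r, a ^ l • Pi.single (g ^ l) 1

theorem orbitState_apply (g : M) (r : ℕ) (a : ℂ) (n : M) :
    orbitState g r a n = ∑ l ∈ range r, if n = g ^ l then a ^ l else 0 := by
  simp [orbitState, Finset.sum_apply, Pi.single_apply]

theorem orbitState_apply_pow (g : M) (a : ℂ) {l : ℕ} (hl : l < orderOf g) :
    orbitState g (orderOf g) a (g ^ l) = a ^ l := by
  rw [orbitState_apply, Finset.sum_eq_single_of_mem l (mem_range.2 hl) fun l' hl' hne => ?_,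
    if_pos rfl]
  exact if_neg fun h => hne (pow_injOn_Iio_orderOf (mem_range.1 hl') hl h.symm)

theorem orbitState_eq_smul_sum_succ {g : M} {r : ℕ} {a : ℂ} (hg : g ^ r = 1) (ha : a ^ r = 1) :
    orbitState g r a = a • ∑ l ∈ range r, a ^ l • Pi.single (g ^ (l + 1)) 1 := by
  set f : ℕ → M → ℂ := fun l => a ^ l • Pi.single (g ^ l) 1
  have hf : f r = f 0 := by simp [f, hg, ha]
  have := (sum_range_succ' f r).symm.trans (sum_range_succ f r)
  rw [hf, add_left_inj] at this
  simp only [orbitState, ← this, smul_sum, smul_smul, f, pow_succ']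

variable [Fintype M]

theorem mulVec_orbitState {g : M} {r : ℕ} {a b : ℂ} (hg : g ^ r = 1) (ha : a ^ r = 1)
    (hba : b * a = 1) :
    (of fun m n : M => if m = g * n then (1 : ℂ) else 0) *ᵥ orbitState g r a =
      b • orbitState g r a := by
  have hcol (n : M) : (of fun m n : M => if m = g * n then (1 : ℂ) else 0) *ᵥ Pi.single n 1 =
      Pi.single (g * n) 1 := by
    ext m; simp [Pi.single_apply]
  conv_rhs => rw [orbitState_eq_smul_sum_succ hg ha, smul_smul, hba, one_smul]
  rw [orbitState, mulVec_sum]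
  simp only [mulVec_smul, hcol, pow_succ']

theorem sum_conj_orbitState_mul (g : M) (a b : ℂ) :
    ∑ n, conj (orbitState g (orderOf g) a n) * orbitState g (orderOf g) b n =
      ∑ l ∈ range (orderOf g), (conj a * b) ^ l := by
  simp only [orbitState_apply g _ b, mul_sum, mul_ite, mul_zero]
  rw [sum_comm]
  refine sum_congr rfl fun l hl => ?_
  rw [sum_ite_eq', if_pos (mem_univ _), orbitState_apply_pow g a (mem_range.1 hl), map_pow,
    mul_pow]

end OrbitState

theorem IsPrimitiveRoot.sum_range_conj_pow_mul_pow {ζ : ℂ} {r : ℕ} (hζ : IsPrimitiveRoot ζ r)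
    {j j' : ℕ} (hj : j < r) (hj' : j' < r) :
    ∑ l ∈ range r, (conj (ζ ^ j) * ζ ^ j') ^ l = if j = j' then (r : ℂ) else 0 := by
  have hr : r ≠ 0 := by omega
  have hζj : ζ ^ j ≠ 0 := pow_ne_zero _ (hζ.ne_zero hr)
  rw [← RCLike.inv_eq_conj (by rw [norm_pow, hζ.norm'_eq_one hr, one_pow])]
  split_ifs with hjj
  · rw [← hjj, inv_mul_cancel₀ hζj]
    simp
  · have hne : (ζ ^ j)⁻¹ * ζ ^ j' ≠ 1 := fun h =>
      hjj (hζ.pow_inj hj hj' (inv_mul_eq_one₀ hζj |>.1 h))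
    rw [geom_sum_eq hne, mul_pow, inv_pow, ← pow_mul, ← pow_mul, mul_comm j, mul_comm j',
      pow_mul, pow_mul, hζ.pow_eq_one]
    simp

theorem eigenvectors_of_modular_mult_general (N : ℕ) [NeZero N]
    (x : ℕ) (r : ℕ) (hr : orderOf (x : ZMod N) = r)
    (hr0 : 0 < r)
    (U : Matrix (ZMod N) (ZMod N) ℂ)
    (hU : U = Matrix.of fun m n : ZMod N => if m = (x : ZMod N) * n then (1 : ℂ) else 0)
    (ψ : ℕ → ZMod N → ℂ)
    (hψ : ∀ j, ψ j = fun n => (1 / Real.sqrt r) * ∑ l ∈ Finset.range r,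
      if n = ((x : ZMod N)) ^ l then
        Complex.exp (-(2 * Real.pi * Complex.I * l * j / r)) else 0) :
    (∀ j < r, U.mulVec (ψ j) = Complex.exp (2 * Real.pi * Complex.I * j / r) • ψ j) ∧
    (∀ j < r, ∀ j' < r,
      (∑ n : ZMod N, (starRingEnd ℂ) (ψ j n) * ψ j' n) =
        if j = j' then 1 else 0) := by
  subst hU hr
  set r := orderOf (x : ZMod N)
  set ζ := exp (2 * Real.pi * I / r)
  have hζ : IsPrimitiveRoot ζ r := isPrimitiveRoot_exp r hr0.ne'
  set c : ℂ := 1 / Real.sqrt r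
  have hψ' (j : ℕ) : ψ j = c • orbitState (x : ZMod N) r (ζ⁻¹ ^ j) := by
    ext n
    simp only [hψ, Pi.smul_apply, smul_eq_mul, orbitState_apply, ζ, ← exp_neg, ← exp_nat_mul]
    congr 1; refine sum_congr rfl fun l _ => ?_
    congr 2; ring
  have hc : conj c * c = (r : ℂ)⁻¹ := by
    rw [map_div₀, map_one, conj_ofReal, div_mul_div_comm, one_mul, ← ofReal_mul,
      Real.mul_self_sqrt (Nat.cast_nonneg r), ofReal_natCast, one_div]
  constructor
  · intro j _
    have hζj : exp (2 * Real.pi * I * j / r) = ζ ^ j := by rw [← exp_nat_mul]; ring_nf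
    rw [hψ', mulVec_smul, mulVec_orbitState (pow_orderOf_eq_one _), smul_comm]
    · rw [← pow_mul, pow_mul', hζ.inv.pow_eq_one, one_pow]
    · rw [hζj, ← mul_pow, mul_inv_cancel₀ (hζ.ne_zero hr0.ne'), one_pow]
  · intro j hj j' hj'
    simp only [hψ', Pi.smul_apply, smul_eq_mul, map_mul, mul_mul_mul_comm, ← mul_sum]
    rw [sum_conj_orbitState_mul, hc, hζ.inv.sum_range_conj_pow_mul_pow hj hj']
    split_ifs <;> simp [hr0.ne']

/-- The states `|ψ_j⟩ = (1/√r) Σ_l e^{-2πi l j / r} |x^l mod N⟩` are eigenvectors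
of the modular-multiplication unitary `U_B |n⟩ = |x·n mod N⟩` with eigenvalues
`e^{2πi j / r}`, and they are orthonormal for `j = 0, …, r-1`. -/
theorem eigenvectors_of_modular_mult (N : ℕ) [NeZero N] (hN : 2 ≤ N)
    (x : ℕ) (hx : Nat.Coprime x N) (r : ℕ) (hr : orderOf (x : ZMod N) = r)
    (hr0 : 0 < r)
    (U : Matrix (ZMod N) (ZMod N) ℂ)
    (hU : U = Matrix.of fun m n : ZMod N => if m = (x : ZMod N) * n then (1 : ℂ) else 0)
    (ψ : ℕ → ZMod N → ℂ)
    (hψ : ∀ j, ψ j = fun n => (1 / Real.sqrt r) * ∑ l ∈ Finset.range r,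
      if n = ((x : ZMod N)) ^ l then
        Complex.exp (-(2 * Real.pi * Complex.I * l * j / r)) else 0) :
    (∀ j < r, U.mulVec (ψ j) = Complex.exp (2 * Real.pi * Complex.I * j / r) • ψ j) ∧
    (∀ j < r, ∀ j' < r,
      (∑ n : ZMod N, (starRingEnd ℂ) (ψ j n) * ψ j' n) =
        if j = j' then 1 else 0) :=
  eigenvectors_of_modular_mult_general N x r hr hr0 U hU ψ hψ
end

section
/- Let Λ be a qubit quantum channel with Λ(|n⟩⟨m|) = Σ_{k,l} Λ^{nm}_{kl} |k⟩⟨l| (n,m,k,l ∈ {0,1}). Then the functional 𝒟(Λ) = max_ρ ‖Δ Λ (id − Δ) ρ‖₁, where the maximum is over qubit density matrices ρ and Δ is the dephasing map Δ(ρ) = Σ_i |i⟩⟨i|ρ|i⟩⟨i|, equals 2|Λ^{01}_{00}|. -/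
open Matrix ComplexOrder

/-!
Write `a = Λ^{01}_{00}`. Hermiticity of the Choi matrix gives `Λ^{10}_{00} = conj a`, and trace
preservation makes `Λ(|0⟩⟨1|)` and `Λ(|1⟩⟨0|)` traceless. Hence for a Hermitian `ρ` with
off-diagonal entry `z = ρ₀₁` the diagonal of `Λ(ρ - Δρ)` is `(2 Re(z a), -2 Re(z a))`, and the
functional equals `4 |Re(z a)| ≤ 4 |z| |a|`. For a density matrix `|z|² ≤ ρ₀₀ ρ₁₁ ≤ 1/4`, so the
value is at most `2 |a|`, attained at the pure state `½ (u, 1)(u, 1)†` with `|u| = 1`, `u a = |a|`.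
-/

theorem Matrix.trace_sub_diagonal_diag {n R : Type*} [Fintype n] [DecidableEq n]
    [AddCommGroup R] (A : Matrix n n R) : (A - diagonal fun k => A k k).trace = 0 := by
  rw [trace_sub, trace_diagonal]
  exact sub_self _

theorem Matrix.apply_one_one_eq_neg_of_trace_eq_zero {R : Type*} [AddCommGroup R]
    {A : Matrix (Fin 2) (Fin 2) R} (hA : A.trace = 0) : A 1 1 = -A 0 0 := by
  rw [trace_fin_two] at hA
  exact eq_neg_of_add_eq_zero_right hA

theorem Matrix.sub_diagonal_diag_fin_two {R : Type*} [Ring R] (A : Matrix (Fin 2) (Fin 2) R) :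
    (A - diagonal fun k => A k k) = A 0 1 • single 0 1 1 + A 1 0 • single 1 0 1 := by
  ext i j
  fin_cases i <;> fin_cases j <;> simp

theorem Matrix.PosSemidef.two_mul_norm_apply_zero_one_le_re_trace
    {A : Matrix (Fin 2) (Fin 2) ℂ} (hA : A.PosSemidef) : 2 * ‖A 0 1‖ ≤ A.trace.re := by
  have h00 := Complex.le_def.mp (hA.diag_nonneg (i := 0))
  have h11 := Complex.le_def.mp (hA.diag_nonneg (i := 1))
  have hdet := (Complex.le_def.mp hA.det_nonneg).1
  have h10 : A 1 0 = star (A 0 1) := (hA.1.apply 1 0).symm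
  simp only [det_fin_two, h10, Complex.star_def, Complex.mul_conj, Complex.sub_re,
    Complex.mul_re, Complex.ofReal_re, Complex.zero_re] at hdet h00 h11
  simp only [Complex.zero_im] at h00 h11
  rw [← h00.2, ← h11.2] at hdet
  rw [trace_fin_two, Complex.add_re]
  have hnormSq := Complex.normSq_eq_norm_sq (A 0 1)
  nlinarith [norm_nonneg (A 0 1), sq_nonneg ((A 0 0).re - (A 1 1).re)]

theorem Complex.exists_norm_eq_one_mul_eq_norm (a : ℂ) : ∃ u : ℂ, ‖u‖ = 1 ∧ u * a = ‖a‖ := by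
  refine ⟨exp (-(arg a * I)), by simpa using norm_exp_ofReal_mul_I (-arg a), ?_⟩
  nth_rw 2 [← norm_mul_exp_arg_mul_I a]
  rw [mul_left_comm, ← exp_add, neg_add_cancel, exp_zero, mul_one]

theorem exists_posSemidef_trace_eq_one_apply_zero_one_eq {u : ℂ} (hu : ‖u‖ = 1) :
    ∃ ρ : Matrix (Fin 2) (Fin 2) ℂ, ρ.PosSemidef ∧ ρ.trace = 1 ∧ ρ 0 1 = u / 2 := by
  refine ⟨(1 / 2 : ℂ) • vecMulVec ![u, 1] (star ![u, 1]),
    (posSemidef_vecMulVec_self_star _).smul (by norm_num [Complex.le_def]), ?_, ?_⟩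
  · simp only [trace_fin_two, Matrix.smul_apply, vecMulVec_apply, Pi.star_apply]
    simp [Complex.mul_conj, Complex.normSq_eq_norm_sq, hu]
    norm_num
  · simp only [Matrix.smul_apply, vecMulVec_apply, Pi.star_apply, Matrix.cons_val_zero,
      Matrix.cons_val_one, star_one, mul_one, smul_eq_mul]
    ring

theorem apply_single_apply_eq_star_of_isHermitian_choi {n : Type*} [DecidableEq n]
    (Λ : Matrix n n ℂ →ₗ[ℂ] Matrix n n ℂ)
    (hΛ : (Matrix.of fun p q : n × n => (Λ (single p.1 q.1 1)) p.2 q.2).IsHermitian)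
    (i j k l : n) : (Λ (single j i 1)) l k = star ((Λ (single i j 1)) k l) :=
  (hΛ.apply (j, l) (i, k)).symm

theorem sum_norm_diag_apply_sub_diagonal_diag
    (Λ : Matrix (Fin 2) (Fin 2) ℂ →ₗ[ℂ] Matrix (Fin 2) (Fin 2) ℂ)
    (hTP : ∀ ρ : Matrix (Fin 2) (Fin 2) ℂ, (Λ ρ).trace = ρ.trace)
    (hΛ : (Matrix.of fun p q : Fin 2 × Fin 2 =>
        (Λ (Matrix.single p.1 q.1 1)) p.2 q.2).IsHermitian)
    {ρ : Matrix (Fin 2) (Fin 2) ℂ} (hρ : ρ.IsHermitian) :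
    ∑ i, ‖(Λ (ρ - diagonal fun k => ρ k k)) i i‖ =
      4 * |(ρ 0 1 * (Λ (single 0 1 1)) 0 0).re| := by
  have htr : (Λ (ρ - diagonal fun k => ρ k k)).trace = 0 := by
    rw [hTP, trace_sub_diagonal_diag]
  have h00 : (Λ (ρ - diagonal fun k => ρ k k)) 0 0 =
      ρ 0 1 * (Λ (single 0 1 1)) 0 0 + star (ρ 0 1 * (Λ (single 0 1 1)) 0 0) := by
    rw [sub_diagonal_diag_fin_two, map_add, map_smul, map_smul, Matrix.add_apply,
      Matrix.smul_apply, Matrix.smul_apply,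
      apply_single_apply_eq_star_of_isHermitian_choi Λ hΛ 0 1 0 0, ← hρ.apply 1 0, star_mul, smul_eq_mul, smul_eq_mul, mul_comm (star _)]
  rw [Fin.sum_univ_two, apply_one_one_eq_neg_of_trace_eq_zero htr, norm_neg, h00,
    Complex.star_def, Complex.add_conj, Complex.norm_real, Real.norm_eq_abs, abs_mul]
  norm_num
  ring

/-- For a qubit quantum channel `Λ` (trace-preserving with positive semidefinite
Choi matrix), the functional `𝒟(Λ) = max_ρ ‖Δ Λ (id - Δ) ρ‖₁` (maximum over qubit
density matrices; since the argument of the trace norm is diagonal, `‖·‖₁` is the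
sum of the absolute values of the diagonal entries) equals `2 |Λ^{01}_{00}|`,
where `Λ^{01}_{00} = ⟨0|Λ(|0⟩⟨1|)|0⟩`. -/
theorem D_eq_two_abs_offdiag
    (Λ : Matrix (Fin 2) (Fin 2) ℂ →ₗ[ℂ] Matrix (Fin 2) (Fin 2) ℂ)
    (hTP : ∀ ρ : Matrix (Fin 2) (Fin 2) ℂ, (Λ ρ).trace = ρ.trace)
    (hCP : (Matrix.of fun p q : Fin 2 × Fin 2 =>
        (Λ (Matrix.single p.1 q.1 1)) p.2 q.2).PosSemidef) :
    IsGreatest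
      {t : ℝ | ∃ ρ : Matrix (Fin 2) (Fin 2) ℂ, ρ.PosSemidef ∧ ρ.trace = 1 ∧
        t = ∑ i, ‖(Λ (ρ - Matrix.diagonal fun k => ρ k k)) i i‖}
      (2 * ‖(Λ (Matrix.single 0 1 1)) 0 0‖) := by
  set a := (Λ (single 0 1 1)) 0 0
  constructor
  · obtain ⟨u, hu, hua⟩ := Complex.exists_norm_eq_one_mul_eq_norm a
    obtain ⟨ρ, hρ, htr, hρ01⟩ := exists_posSemidef_trace_eq_one_apply_zero_one_eq hu
    refine ⟨ρ, hρ, htr, ?_⟩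
    have hρa : ρ 0 1 * a = (‖a‖ / 2 : ℝ) := by
      rw [hρ01, div_mul_eq_mul_div, hua, Complex.ofReal_div, Complex.ofReal_ofNat]
    rw [sum_norm_diag_apply_sub_diagonal_diag Λ hTP hCP.1 hρ.1, hρa, Complex.ofReal_re,
      abs_of_nonneg (by positivity)]
    ring
  · rintro t ⟨ρ, hρ, htr, rfl⟩
    have hz := hρ.two_mul_norm_apply_zero_one_le_re_trace
    rw [htr, Complex.one_re] at hz
    rw [sum_norm_diag_apply_sub_diagonal_diag Λ hTP hCP.1 hρ.1]
    calc 4 * |(ρ 0 1 * a).re| ≤ 4 * (‖ρ 0 1‖ * ‖a‖) := by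
          rw [← norm_mul]; gcongr; exact Complex.abs_re_le_norm _
      _ ≤ 2 * ‖a‖ := by nlinarith [norm_nonneg a]
end

section
/- Let Λ be a quantum channel and Φ a channel satisfying ΔΦ = ΔΦΔ (detection-incoherent). Then max_ρ ‖Δ Φ Λ (id − Δ) ρ‖₁ ≤ max_ρ ‖Δ Λ (id − Δ) ρ‖₁, i.e., the functional 𝒟 is monotone under post-processing with detection-incoherent channels. -/
/-!
Since `Φ` is detection-incoherent, the diagonal of `Φ Y` only depends on the diagonal of `Y`.
A channel sends each `|k⟩⟨k|` to a state, so it maps `diagonal c` to a matrix whose diagonal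
has `ℓ¹`-norm at most `∑ k, ‖c k‖`. With `Y = Λ (ρ - Δ ρ)` this bounds every element of the
left-hand set by the corresponding element of the right-hand set, which is bounded above
because the entries of a density matrix have modulus at most `1`.
-/

open Matrix ComplexOrder

namespace Matrix.PosSemidef

variable {n : Type*} {A : Matrix n n ℂ}

lemma norm_apply_sq_le (hA : A.PosSemidef) (p q : n) :
    ‖A p q‖ ^ 2 ≤ (A p p).re * (A q q).re := by
  have hdet := (hA.submatrix ![p, q]).det_nonneg
  rw [det_fin_two] at hdet
  simp only [submatrix_apply, cons_val_zero, cons_val_one] at hdet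
  rw [← hA.1.apply p q, Complex.star_def, Complex.conj_mul', Complex.le_def] at hdet
  rw [← hA.1.apply p q, Complex.star_def, Complex.norm_conj]
  have hp := (Complex.le_def.mp (hA.diag_nonneg (i := p))).2
  have hq := (Complex.le_def.mp (hA.diag_nonneg (i := q))).2
  simp only [Complex.zero_im] at hp hq
  simpa [← hp, ← hq, ← Complex.ofReal_pow] using hdet.1

variable [Fintype n]

lemma re_apply_le_re_trace (hA : A.PosSemidef) (i : n) : (A i i).re ≤ A.trace.re := by
  rw [trace, Complex.re_sum]
  exact Finset.single_le_sum (f := fun j => (A j j).re)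
    (fun j _ => (Complex.le_def.mp hA.diag_nonneg).1) (Finset.mem_univ i)

lemma norm_apply_le_re_trace (hA : A.PosSemidef) (p q : n) : ‖A p q‖ ≤ A.trace.re := by
  have hp := hA.re_apply_le_re_trace p
  have hq := hA.re_apply_le_re_trace q
  have hp₀ : 0 ≤ (A p p).re := (Complex.le_def.mp hA.diag_nonneg).1
  have hq₀ : 0 ≤ (A q q).re := (Complex.le_def.mp hA.diag_nonneg).1
  have hsq : ‖A p q‖ ^ 2 ≤ A.trace.re ^ 2 :=
    (hA.norm_apply_sq_le p q).trans (by nlinarith)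
  exact (pow_le_pow_iff_left₀ (norm_nonneg _) (hp₀.trans hp) two_ne_zero).mp hsq

end Matrix.PosSemidef

variable {n : Type*} [Fintype n]

lemma norm_sub_diagonal_apply_le_one [DecidableEq n] {ρ : Matrix n n ℂ} (hρ : ρ.PosSemidef)
    (htr : ρ.trace = 1) (p q : n) : ‖(ρ - diagonal fun k => ρ k k) p q‖ ≤ 1 := by
  obtain rfl | hpq := eq_or_ne p q
  · simp
  · simpa [diagonal_apply_ne _ hpq, htr] using hρ.norm_apply_le_re_trace p q

section SupNorm

attribute [local instance] Matrix.normedAddCommGroup Matrix.normedSpace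

lemma LinearMap.exists_sum_norm_diag_le (Λ : Matrix n n ℂ →ₗ[ℂ] Matrix n n ℂ) :
    ∃ C, ∀ X : Matrix n n ℂ, ∑ i, ‖Λ X i i‖ ≤ C * ‖X‖ := by
  obtain ⟨C, -, hC⟩ :=
    SemilinearMapClass.bound_of_continuous Λ Λ.continuous_of_finiteDimensional
  refine ⟨Fintype.card n * C, fun X => ?_⟩
  calc ∑ i, ‖Λ X i i‖ ≤ ∑ _i : n, C * ‖X‖ :=
        Finset.sum_le_sum fun i _ => (norm_entry_le_entrywise_sup_norm (Λ X)).trans (hC X)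
    _ = Fintype.card n * C * ‖X‖ := by simp [mul_assoc]

lemma bddAbove_sum_norm_diag_map_sub_diagonal [DecidableEq n]
    (Λ : Matrix n n ℂ →ₗ[ℂ] Matrix n n ℂ) :
    BddAbove {t : ℝ | ∃ ρ : Matrix n n ℂ, ρ.PosSemidef ∧ ρ.trace = 1 ∧
      t = ∑ i, ‖(Λ (ρ - diagonal fun k => ρ k k)) i i‖} := by
  obtain ⟨C, hC⟩ := Λ.exists_sum_norm_diag_le
  refine ⟨C ⊔ 0, ?_⟩
  rintro t ⟨ρ, hρ, htr, rfl⟩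
  have hX : ‖ρ - diagonal fun k => ρ k k‖ ≤ 1 :=
    (norm_le_iff zero_le_one).mpr (norm_sub_diagonal_apply_le_one hρ htr)
  calc _ ≤ C * ‖ρ - diagonal fun k => ρ k k‖ := hC _
    _ ≤ (C ⊔ 0) * 1 := mul_le_mul (le_max_left _ _) hX (norm_nonneg _) (le_max_right _ _)
    _ = C ⊔ 0 := mul_one _

end SupNorm

variable [DecidableEq n]

lemma sum_norm_diag_map_diagonal_le (Φ : Matrix n n ℂ →ₗ[ℂ] Matrix n n ℂ)
    (hTP : ∀ ρ, (Φ ρ).trace = ρ.trace) (hpos : ∀ k i, 0 ≤ Φ (single k k 1) i i)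
    (c : n → ℂ) : ∑ i, ‖Φ (diagonal c) i i‖ ≤ ∑ k, ‖c k‖ := by
  have hexpand (i : n) : Φ (diagonal c) i i = ∑ k, c k * Φ (single k k 1) i i := by
    have hsingle (k : n) : single k k (c k) = c k • single k k 1 := by
      rw [smul_single, smul_eq_mul, mul_one]
    simp only [← sum_single_eq_diagonal, hsingle, map_sum, map_smul, Matrix.sum_apply,
      Matrix.smul_apply, smul_eq_mul]
  have hmass (k : n) : ∑ i, ‖Φ (single k k 1) i i‖ = 1 := by
    have := congrArg Complex.re (hTP (single k k 1))
    rw [trace_single_eq_same] at this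
    simpa [trace, Complex.re_sum, ← Complex.re_eq_norm.mpr (hpos k _)] using this
  calc ∑ i, ‖Φ (diagonal c) i i‖ ≤ ∑ i, ∑ k, ‖c k‖ * ‖Φ (single k k 1) i i‖ :=
        Finset.sum_le_sum fun i _ => by
          simpa only [hexpand, norm_mul] using
            norm_sum_le Finset.univ fun k => c k * Φ (single k k 1) i i
    _ = ∑ k, ‖c k‖ := by
        simp only [Finset.sum_comm (γ := n), ← Finset.mul_sum, hmass, mul_one]

def IsDetectionIncoherent (Φ : Matrix n n ℂ →ₗ[ℂ] Matrix n n ℂ) : Prop :=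
  ∀ A : Matrix n n ℂ,
    diagonal (fun i => Φ A i i) = diagonal (fun i => Φ (diagonal fun k => A k k) i i)

lemma IsDetectionIncoherent.sum_norm_diag_map_le {Φ : Matrix n n ℂ →ₗ[ℂ] Matrix n n ℂ}
    (hDI : IsDetectionIncoherent Φ) (hTP : ∀ ρ, (Φ ρ).trace = ρ.trace)
    (hpos : ∀ k i, 0 ≤ Φ (single k k 1) i i) (A : Matrix n n ℂ) :
    ∑ i, ‖Φ A i i‖ ≤ ∑ k, ‖A k k‖ := by
  have hdiag (i : n) : Φ A i i = Φ (diagonal fun k => A k k) i i := by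
    simpa using congrFun₂ (hDI A) i i
  simpa only [hdiag] using sum_norm_diag_map_diagonal_le Φ hTP hpos _

theorem D_mono_under_DI_postprocessing_general (d : ℕ)
    (Λ Φ : Matrix (Fin d) (Fin d) ℂ →ₗ[ℂ] Matrix (Fin d) (Fin d) ℂ)
    (hΦTP : ∀ ρ : Matrix (Fin d) (Fin d) ℂ, (Φ ρ).trace = ρ.trace)
    (hΦCP : (Matrix.of fun p q : Fin d × Fin d =>
        (Φ (Matrix.single p.1 q.1 1)) p.2 q.2).PosSemidef)
    (hDI : ∀ A : Matrix (Fin d) (Fin d) ℂ,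
      Matrix.diagonal (fun i => (Φ A) i i) =
        Matrix.diagonal (fun i => (Φ (Matrix.diagonal fun k => A k k)) i i)) :
    sSup {t : ℝ | ∃ ρ : Matrix (Fin d) (Fin d) ℂ, ρ.PosSemidef ∧ ρ.trace = 1 ∧
        t = ∑ i, ‖(Φ (Λ (ρ - Matrix.diagonal fun k => ρ k k))) i i‖} ≤
    sSup {t : ℝ | ∃ ρ : Matrix (Fin d) (Fin d) ℂ, ρ.PosSemidef ∧ ρ.trace = 1 ∧
        t = ∑ i, ‖(Λ (ρ - Matrix.diagonal fun k => ρ k k)) i i‖} := by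
  have hpos (k i : Fin d) : 0 ≤ Φ (single k k 1) i i := hΦCP.diag_nonneg (i := (k, i))
  refine Real.sSup_le ?_ (Real.sSup_nonneg ?_)
  · rintro t ⟨ρ, hρ, htr, rfl⟩
    exact (IsDetectionIncoherent.sum_norm_diag_map_le hDI hΦTP hpos _).trans
      (le_csSup (bddAbove_sum_norm_diag_map_sub_diagonal Λ) ⟨ρ, hρ, htr, rfl⟩)
  · rintro t ⟨ρ, -, -, rfl⟩
    positivity

/-- Monotonicity of `𝒟` under post-processing by detection-incoherent channels:
if `Φ` is a channel with `ΔΦ = ΔΦΔ`, then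
`max_ρ ‖Δ Φ Λ (id - Δ) ρ‖₁ ≤ max_ρ ‖Δ Λ (id - Δ) ρ‖₁` (maxima over density
matrices; since the arguments of the trace norm are diagonal, `‖·‖₁` is the sum of
the absolute values of the diagonal entries). -/
theorem D_mono_under_DI_postprocessing (d : ℕ)
    (Λ Φ : Matrix (Fin d) (Fin d) ℂ →ₗ[ℂ] Matrix (Fin d) (Fin d) ℂ)
    (hΛTP : ∀ ρ : Matrix (Fin d) (Fin d) ℂ, (Λ ρ).trace = ρ.trace)
    (hΛCP : (Matrix.of fun p q : Fin d × Fin d =>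
        (Λ (Matrix.single p.1 q.1 1)) p.2 q.2).PosSemidef)
    (hΦTP : ∀ ρ : Matrix (Fin d) (Fin d) ℂ, (Φ ρ).trace = ρ.trace)
    (hΦCP : (Matrix.of fun p q : Fin d × Fin d =>
        (Φ (Matrix.single p.1 q.1 1)) p.2 q.2).PosSemidef)
    (hDI : ∀ A : Matrix (Fin d) (Fin d) ℂ,
      Matrix.diagonal (fun i => (Φ A) i i) =
        Matrix.diagonal (fun i => (Φ (Matrix.diagonal fun k => A k k)) i i)) :
    sSup {t : ℝ | ∃ ρ : Matrix (Fin d) (Fin d) ℂ, ρ.PosSemidef ∧ ρ.trace = 1 ∧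
        t = ∑ i, ‖(Φ (Λ (ρ - Matrix.diagonal fun k => ρ k k))) i i‖} ≤
    sSup {t : ℝ | ∃ ρ : Matrix (Fin d) (Fin d) ℂ, ρ.PosSemidef ∧ ρ.trace = 1 ∧
        t = ∑ i, ‖(Λ (ρ - Matrix.diagonal fun k => ρ k k)) i i‖} :=
  D_mono_under_DI_postprocessing_general d Λ Φ hΦTP hΦCP hDI
end

section
/- Let r be an integer with r ≥ 3. Then Euler's totient function satisfies φ(r)/r > δ/(log log r) for the constant δ = e^{−γ}/2, where γ is the Euler–Mascheroni constant (a weaker explicit version of Hardy–Wright Theorem 328: liminf φ(r) log log r / r = e^{−γ}). -/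
/-!
Since `1 - 1/p ≥ exp (-1/(p - 1))`, we have `φ(r)/r ≥ exp (-∑_{p ∣ r} 1/(p - 1))`, and
`∑ 1/(p - 1)` exceeds `∑ 1/p` by at most the telescoping sum `∑ (1/(n - 1) - 1/n) ≤ 1`.
There are at most `log r / log log r` prime factors `p > log r`, contributing at most
`1 / log log r`, while those with `p ≤ log r` contribute at most
`∑_{p ≤ log r} 1/p ≤ log log log r + O(1)` (Mertens' second theorem). The latter follows by
partial summation from Mertens' first theorem `∑_{p ≤ n} log p / p ≤ log n + log 4`, which in
turn comes from Legendre's formula for `n!` and Chebyshev's bound `θ(n) ≤ n log 4`.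
For `r < e²` the trivial bound `φ(r)/r ≥ 1/r` suffices.
-/

open Finset Real
open scoped Nat

lemma Nat.div_le_factorization_factorial {p : ℕ} (hp : p.Prime) (n : ℕ) :
    n / p ≤ (n !).factorization p :=
  calc n / p ≤ (p * (n / p))!.factorization p := by
        rw [Nat.factorization_factorial_mul hp]; omega
    _ ≤ (n !).factorization p :=
      (Nat.factorization_le_iff_dvd (Nat.factorial_ne_zero _) (Nat.factorial_ne_zero _)).2
        (Nat.factorial_dvd_factorial (Nat.mul_div_le n p)) p

lemma Real.log_factorial_eq_sum_primesLE (n : ℕ) :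
    log (n ! : ℝ) = ∑ p ∈ n.primesLE, ((n !).factorization p : ℝ) * log p := by
  rw [log_nat_eq_sum_factorization]
  refine Finsupp.sum_of_support_subset _ (fun p hp => ?_) _ (by simp)
  rw [Nat.support_factorization] at hp
  have hp' := Nat.prime_of_mem_primeFactors hp
  exact Nat.mem_primesLE.2 ⟨hp'.dvd_factorial.1 (Nat.dvd_of_mem_primeFactors hp), hp'⟩

theorem sum_primesLE_log_div_le {n : ℕ} (hn : 0 < n) :
    ∑ p ∈ n.primesLE, log p / p ≤ log n + log 4 := by
  have hn' : (0 : ℝ) < n := by exact_mod_cast hn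
  have legendre : ∑ p ∈ n.primesLE, ((n : ℝ) / p - 1) * log p ≤ log (n ! : ℝ) := by
    rw [log_factorial_eq_sum_primesLE]
    gcongr with p hp
    have h1 := Nat.lt_floor_add_one ((n : ℝ) / p)
    rw [Nat.floor_div_eq_div] at h1
    have h2 : ((n / p : ℕ) : ℝ) ≤ (n !).factorization p := by
      exact_mod_cast Nat.div_le_factorization_factorial (Nat.prime_of_mem_primesLE hp) n
    linarith
  have hfactorial : log (n ! : ℝ) ≤ n * log n := by
    rw [← Real.log_pow]
    exact log_le_log (by positivity) (by exact_mod_cast Nat.factorial_le_pow n)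
  have htheta : ∑ p ∈ n.primesLE, log p ≤ n * log 4 := by
    rw [← Chebyshev.theta_eq_sum_primesLE_log, mul_comm]
    exact Chebyshev.theta_le_log4_mul_x hn'.le
  have hsplit : ∑ p ∈ n.primesLE, ((n : ℝ) / p - 1) * log p
      = n * ∑ p ∈ n.primesLE, log p / p - ∑ p ∈ n.primesLE, log p := by
    rw [mul_sum, ← sum_sub_distrib]
    exact sum_congr rfl fun p _ => by ring
  have : n * ∑ p ∈ n.primesLE, log p / p ≤ n * (log n + log 4) := by linarith
  exact le_of_mul_le_mul_left this hn'

lemma Real.mul_inv_sub_inv_le_log_sub_log {a b : ℝ} (ha : 0 < a) (hab : a ≤ b) :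
    a * (a⁻¹ - b⁻¹) ≤ log b - log a := by
  have hb : 0 < b := ha.trans_le hab
  calc a * (a⁻¹ - b⁻¹) = 1 - (b / a)⁻¹ := by field_simp
    _ ≤ log (b / a) := one_sub_inv_le_log_of_pos (div_pos hb ha)
    _ = log b - log a := log_div hb.ne' ha.ne'

/-- The remainder in partial summation from `∑ log p / p` to `∑ 1 / p`. -/
noncomputable def mertensRemainder (N : ℕ) : ℝ :=
  ∑ p ∈ N.primesLE, (p : ℝ)⁻¹ - (∑ p ∈ N.primesLE, log p / p - log 4) / log N - log (log N)

lemma mertensRemainder_succ (N : ℕ) :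
    mertensRemainder (N + 1) = ∑ p ∈ N.primesLE, (p : ℝ)⁻¹
      - (∑ p ∈ N.primesLE, log p / p - log 4) / log (N + 1) - log (log (N + 1)) := by
  rw [mertensRemainder, Nat.primesLE_succ]
  push_cast
  -- a new prime `N + 1` adds `1 / (N + 1)` to both the first and the second term
  split_ifs with hprime
  · have : log ((N : ℝ) + 1) ≠ 0 := (log_pos (by exact_mod_cast hprime.one_lt)).ne'
    rw [sum_insert (Nat.notMem_primesLE N), sum_insert (Nat.notMem_primesLE N)]
    push_cast
    field_simp
    ring
  · rfl

lemma mertensRemainder_succ_le {N : ℕ} (hN : 2 ≤ N) :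
    mertensRemainder (N + 1) ≤ mertensRemainder N := by
  have hN' : (2 : ℝ) ≤ N := by exact_mod_cast hN
  have ha : 0 < log N := log_pos (by linarith)
  have hab : log N ≤ log (N + 1) := log_le_log (by linarith) (by linarith)
  have hinv : 0 ≤ (log N)⁻¹ - (log (N + 1))⁻¹ := sub_nonneg.2 (inv_anti₀ ha hab)
  have hmertens := sum_primesLE_log_div_le (n := N) (by omega)
  have key : (∑ p ∈ N.primesLE, log p / p - log 4) * ((log N)⁻¹ - (log (N + 1))⁻¹)
      ≤ log (log (N + 1)) - log (log N) :=
    (mul_le_mul_of_nonneg_right (by linarith) hinv).trans (mul_inv_sub_inv_le_log_sub_log ha hab)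
  rw [mertensRemainder_succ, mertensRemainder, div_eq_mul_inv, div_eq_mul_inv]
  linarith

lemma mertensRemainder_two : mertensRemainder 2 = 2 - log (log 2) := by
  have hprimes : Nat.primesLE 2 = {2} := by decide
  have hlog4 : log 4 = 2 * log 2 := by
    rw [show (4 : ℝ) = 2 ^ 2 by norm_num, Real.log_pow, Nat.cast_ofNat]
  have : log 2 ≠ 0 := (log_pos one_lt_two).ne'
  rw [mertensRemainder, hprimes, sum_singleton, sum_singleton, hlog4]
  push_cast
  field_simp
  ring

lemma mertensRemainder_le {N : ℕ} (hN : 2 ≤ N) : mertensRemainder N ≤ 3 := by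
  induction N, hN using Nat.le_induction with
  | base =>
    have hlog2 : 1 / 2 < log 2 := by linarith [log_two_gt_d9]
    have : (log 2)⁻¹ < 2 := by rw [inv_lt_comm₀ (by linarith) two_pos]; linarith
    rw [mertensRemainder_two]
    linarith [one_sub_inv_le_log_of_pos (log_pos one_lt_two)]
  | succ N hN ih => exact (mertensRemainder_succ_le hN).trans ih

theorem sum_primesLE_inv_le {N : ℕ} (hN : 2 ≤ N) :
    ∑ p ∈ N.primesLE, (p : ℝ)⁻¹ ≤ log (log N) + 4 := by
  have hlog : 0 < log N := log_pos (by exact_mod_cast hN)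
  have hmertens : (∑ p ∈ N.primesLE, log p / p - log 4) / log N ≤ 1 :=
    (div_le_one hlog).2 (by linarith [sum_primesLE_log_div_le (n := N) (by omega)])
  have := mertensRemainder_le hN
  rw [mertensRemainder] at this
  linarith

lemma card_filter_primeFactors_lt_mul_log_le {r : ℕ} (hr : r ≠ 0) {L : ℝ} (hL : 0 < L) :
    #{p ∈ r.primeFactors | L < (p : ℕ)} * log L ≤ log r := by
  set s := {p ∈ r.primeFactors | L < (p : ℕ)}
  have hprod : L ^ #s ≤ r :=
    calc L ^ #s = ∏ _p ∈ s, L := (prod_const L).symm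
      _ ≤ ∏ p ∈ s, (p : ℝ) := prod_le_prod (fun _ _ => hL.le) fun p hp => (mem_filter.1 hp).2.le
      _ ≤ ∏ p ∈ r.primeFactors, (p : ℝ) :=
        prod_le_prod_of_subset_of_one_le (filter_subset _ _) (fun _ _ => by positivity)
          fun p hp _ => by exact_mod_cast (Nat.prime_of_mem_primeFactors hp).one_lt.le
      _ ≤ r := by
        rw [← Nat.cast_prod]
        exact_mod_cast Nat.le_of_dvd (Nat.pos_of_ne_zero hr) (Nat.prod_primeFactors_dvd r)
  rw [← Real.log_pow]
  exact log_le_log (by positivity) hprod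

lemma sum_inv_filter_primeFactors_lt_le {r : ℕ} (hr : r ≠ 0) {L : ℝ} (hL : 1 < L) :
    ∑ p ∈ r.primeFactors with L < (p : ℕ), (p : ℝ)⁻¹ ≤ log r / (L * log L) := by
  have hlogL : 0 < log L := log_pos hL
  calc ∑ p ∈ r.primeFactors with L < (p : ℕ), (p : ℝ)⁻¹
      ≤ ∑ p ∈ r.primeFactors with L < (p : ℕ), L⁻¹ :=
        sum_le_sum fun p hp => inv_anti₀ (by linarith) (mem_filter.1 hp).2.le
    _ = #{p ∈ r.primeFactors | L < (p : ℕ)} * log L / (L * log L) := by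
        rw [sum_const, nsmul_eq_mul]
        field_simp
    _ ≤ log r / (L * log L) := by
        gcongr
        exact card_filter_primeFactors_lt_mul_log_le hr (by linarith)

theorem sum_inv_primeFactors_le {r : ℕ} (hr : 2 ≤ log r) :
    ∑ p ∈ r.primeFactors, (p : ℝ)⁻¹ ≤ log (log (log r)) + 6 := by
  have hr0 : r ≠ 0 := by rintro rfl; norm_num at hr
  set L := log r
  have hN : 2 ≤ ⌊L⌋₊ := Nat.le_floor (by exact_mod_cast hr)
  have hlogL : log 2 ≤ log L := log_le_log two_pos hr
  have hsmall : ∑ p ∈ r.primeFactors with (p : ℕ) ≤ L, (p : ℝ)⁻¹ ≤ log (log L) + 4 :=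
    calc ∑ p ∈ r.primeFactors with (p : ℕ) ≤ L, (p : ℝ)⁻¹
        ≤ ∑ p ∈ ⌊L⌋₊.primesLE, (p : ℝ)⁻¹ := by
          refine sum_le_sum_of_subset_of_nonneg (fun p hp => ?_) fun _ _ _ => by positivity
          rw [mem_filter] at hp
          exact Nat.mem_primesLE.2
            ⟨Nat.le_floor hp.2, Nat.prime_of_mem_primeFactors hp.1⟩
      _ ≤ log (log ⌊L⌋₊) + 4 := sum_primesLE_inv_le hN
      _ ≤ log (log L) + 4 := by
          have : 0 < log ⌊L⌋₊ := log_pos (by exact_mod_cast hN)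
          gcongr
          exact Nat.floor_le (by linarith)
  have hlarge : ∑ p ∈ r.primeFactors with ¬(p : ℕ) ≤ L, (p : ℝ)⁻¹ ≤ 2 := by
    simp only [not_le]
    have hlog2 : 1 / 2 < log 2 := by linarith [log_two_gt_d9]
    calc ∑ p ∈ r.primeFactors with L < (p : ℕ), (p : ℝ)⁻¹ ≤ L / (L * log L) :=
          sum_inv_filter_primeFactors_lt_le hr0 (by linarith)
      _ = 1 / log L := by field_simp
      _ ≤ 2 := by rw [div_le_iff₀ (by linarith)]; linarith
  rw [← sum_filter_add_sum_filter_not _ (fun p : ℕ => (p : ℝ) ≤ L)]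
  linarith

lemma Real.exp_neg_inv_sub_one_le {x : ℝ} (hx : 1 < x) : exp (-(x - 1)⁻¹) ≤ 1 - x⁻¹ := by
  have hx1 : 0 < x - 1 := by linarith
  calc exp (-(x - 1)⁻¹) = (exp (x - 1)⁻¹)⁻¹ := exp_neg _
    _ ≤ ((x - 1)⁻¹ + 1)⁻¹ := inv_anti₀ (by positivity) (add_one_le_exp _)
    _ = 1 - x⁻¹ := by field_simp; ring

lemma sum_inv_sub_one_sub_inv_le_one {s : Finset ℕ} (hs : ∀ n ∈ s, 2 ≤ n) :
    ∑ n ∈ s, (((n : ℝ) - 1)⁻¹ - (n : ℝ)⁻¹) ≤ 1 := by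
  have hsub : s ⊆ Ico 2 (s.sup id + 1) := fun n hn =>
    mem_Ico.2 ⟨hs n hn, Nat.lt_succ_of_le (le_sup (f := id) hn)⟩
  calc ∑ n ∈ s, (((n : ℝ) - 1)⁻¹ - (n : ℝ)⁻¹)
      ≤ ∑ n ∈ Ico 2 (s.sup id + 1), (((n : ℝ) - 1)⁻¹ - (n : ℝ)⁻¹) := by
        refine sum_le_sum_of_subset_of_nonneg hsub fun n hn _ => ?_
        have : (2 : ℝ) ≤ n := by exact_mod_cast (mem_Ico.1 hn).1
        exact sub_nonneg.2 (inv_anti₀ (by linarith) (by linarith))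
    _ = ∑ k ∈ range (s.sup id - 1), (((k : ℝ) + 1)⁻¹ - ((k + 1 : ℕ) + 1 : ℝ)⁻¹) := by
        rw [sum_Ico_eq_sum_range]
        refine sum_congr (congrArg range (by omega)) fun k _ => ?_
        push_cast
        ring_nf
    _ = 1 - ((s.sup id - 1 : ℕ) + 1 : ℝ)⁻¹ := by
        rw [sum_range_sub' (fun k : ℕ => ((k : ℝ) + 1)⁻¹)]
        norm_num
    _ ≤ 1 := by
        have : (0 : ℝ) ≤ ((s.sup id - 1 : ℕ) + 1 : ℝ)⁻¹ := by positivity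
        linarith

lemma Nat.totient_div_self_eq_prod {n : ℕ} (hn : n ≠ 0) :
    (n.totient : ℝ) / n = ∏ p ∈ n.primeFactors, (1 - (p : ℝ)⁻¹) := by
  have h := congrArg (fun q : ℚ => (q : ℝ)) (Nat.totient_eq_mul_prod_factors n)
  push_cast at h
  rw [h, mul_div_cancel_left₀ _ (Nat.cast_ne_zero.2 hn)]

theorem exp_neg_sum_inv_sub_one_le_totient_div {n : ℕ} (hn : n ≠ 0) :
    exp (-∑ p ∈ n.primeFactors, ((p : ℝ) - 1)⁻¹) ≤ n.totient / n := by
  rw [Nat.totient_div_self_eq_prod hn, ← sum_neg_distrib, exp_sum]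
  exact prod_le_prod (fun _ _ => (exp_pos _).le) fun p hp =>
    exp_neg_inv_sub_one_le (by exact_mod_cast (Nat.prime_of_mem_primeFactors hp).one_lt)

theorem exp_neg_seven_div_log_log_le_totient_div {r : ℕ} (hr : 2 ≤ log r) :
    exp (-7) / log (log r) ≤ r.totient / r := by
  have hr0 : r ≠ 0 := by rintro rfl; norm_num at hr
  have hloglog : 0 < log (log r) := log_pos (by linarith)
  have hsum : ∑ p ∈ r.primeFactors, ((p : ℝ) - 1)⁻¹ ≤ log (log (log r)) + 7 := by
    have := sum_inv_sub_one_sub_inv_le_one (s := r.primeFactors)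
      fun p hp => (Nat.prime_of_mem_primeFactors hp).two_le
    rw [sum_sub_distrib] at this
    linarith [sum_inv_primeFactors_le hr]
  calc exp (-7) / log (log r) = exp (-(log (log (log r)) + 7)) := by
        rw [neg_add, exp_add, exp_neg (log _), exp_log hloglog]
        ring
    _ ≤ exp (-∑ p ∈ r.primeFactors, ((p : ℝ) - 1)⁻¹) := exp_le_exp.2 (by linarith)
    _ ≤ r.totient / r := exp_neg_sum_inv_sub_one_le_totient_div hr0

lemma one_div_twelve_le_log_log {x : ℝ} (hx : 3 ≤ x) : 1 / 12 ≤ log (log x) := by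
  have hlog : 12 / 11 < log x := by
    linarith [log_three_gt_d9, log_le_log (by norm_num) hx]
  have := one_sub_inv_le_log_of_pos (x := log x) (by linarith)
  have : (log x)⁻¹ ≤ 11 / 12 := by
    rw [inv_le_comm₀ (by linarith) (by norm_num)]
    norm_num
    linarith
  linarith

lemma exp_neg_seven_div_log_log_le_totient_div_of_log_lt_two {r : ℕ} (h3 : 3 ≤ r)
    (hr : log r < 2) : exp (-7) / log (log r) ≤ r.totient / r := by
  have hr3 : (3 : ℝ) ≤ r := by exact_mod_cast h3
  have hr8 : (r : ℝ) ≤ 8 := by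
    have : exp 2 < 8 := by
      rw [show (2 : ℝ) = 1 + 1 by norm_num, exp_add]
      nlinarith [exp_one_lt_d9, exp_pos 1]
    linarith [(log_lt_iff_lt_exp (by linarith)).1 hr]
  have hexp7 : 96 * exp (-7) ≤ 1 := by
    have : (2 : ℝ) ^ 7 ≤ exp 7 := by
      rw [show (7 : ℝ) = (7 : ℕ) by norm_num, ← exp_one_pow]
      exact pow_le_pow_left₀ (by norm_num) (by linarith [add_one_le_exp 1]) 7
    rw [exp_neg, ← div_eq_mul_inv, div_le_one (exp_pos _)]
    linarith
  calc exp (-7) / log (log r) ≤ exp (-7) / (1 / 12) :=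
        div_le_div_of_nonneg_left (exp_pos _).le (by norm_num) (one_div_twelve_le_log_log hr3)
    _ ≤ 1 / r := by rw [div_le_div_iff₀ (by norm_num) (by linarith)]; nlinarith
    _ ≤ r.totient / r := by
        gcongr
        exact_mod_cast Nat.totient_pos.2 (by omega)

/-- A weak explicit version of Hardy–Wright Theorem 328: there is a positive
constant `δ` such that Euler's totient function satisfies
`φ(r)/r ≥ δ / log log r` for all `r ≥ 3`. -/
theorem totient_ratio_lower_bound :
    ∃ δ : ℝ, 0 < δ ∧ ∀ r : ℕ, 3 ≤ r →
      δ / Real.log (Real.log r) ≤ (Nat.totient r : ℝ) / r := by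
  refine ⟨exp (-7), exp_pos _, fun r hr => ?_⟩
  rcases le_or_gt 2 (log r) with hlog | hlog
  · exact exp_neg_seven_div_log_log_le_totient_div hlog
  · exact exp_neg_seven_div_log_log_le_totient_div_of_log_lt_two hr hlog
end
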